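/- arXiv:2106.13533 — 3 statements merged into one kernel-verified Lean document; each statement's English description precedes it below -/
import Mathlib

section
/- Let a ∈ (0,1], ρ ∈ (−1, 0) with ρ < A_a = (1−√(8a²+1))/(4a), and define f(t) = (t − 2aρt + a²)/(t(1 − ρ²t)) for t ∈ (0, 1]. Then f attains its unique minimum on (0,1] at t* = a/(ρ(2aρ − 1)), and t* ∈ (0,1). -/
/-!
With `d = ρ (2aρ - 1)` one has the sum-of-squares decomposition
`f(t) = (1 - 2aρ)² + (a - d t)² / (t (1 - ρ² t))`.
For `|ρ| < 1` the denominator is positive on `(0, 1]`, so `f(t) > (1 - 2aρ)²` there except at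
`t = a / d`, where equality holds. The condition `ρ < A_a` says that `ρ` lies below the smaller root
of `2aρ² - ρ - a`, i.e. `a < d`, which puts `a / d` in `(0, 1)`.
-/

open Set

noncomputable def ruinExponent (a ρ t : ℝ) : ℝ :=
  (t - 2 * a * ρ * t + a ^ 2) / (t * (1 - ρ ^ 2 * t))

section

variable {a ρ t : ℝ}

theorem ruinExponent_eq_sq_add (h : t * (1 - ρ ^ 2 * t) ≠ 0) :
    ruinExponent a ρ t =
      (1 - 2 * a * ρ) ^ 2 + (a - ρ * (2 * a * ρ - 1) * t) ^ 2 / (t * (1 - ρ ^ 2 * t)) := by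
  rw [ruinExponent, div_eq_iff h, add_mul, div_mul_cancel₀ _ h]
  ring

theorem ruinExponent_div (hd : ρ * (2 * a * ρ - 1) ≠ 0)
    (h : a / (ρ * (2 * a * ρ - 1)) * (1 - ρ ^ 2 * (a / (ρ * (2 * a * ρ - 1)))) ≠ 0) :
    ruinExponent a ρ (a / (ρ * (2 * a * ρ - 1))) = (1 - 2 * a * ρ) ^ 2 := by
  rw [ruinExponent_eq_sq_add h, mul_div_cancel₀ a hd]
  simp

theorem sq_lt_ruinExponent (hpos : 0 < t * (1 - ρ ^ 2 * t))
    (ht : a - ρ * (2 * a * ρ - 1) * t ≠ 0) :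
    (1 - 2 * a * ρ) ^ 2 < ruinExponent a ρ t := by
  rw [ruinExponent_eq_sq_add hpos.ne']
  exact lt_add_of_pos_right _ (div_pos (sq_pos_of_ne_zero ht) hpos)

theorem mul_one_sub_sq_mul_pos (hρ : ρ ^ 2 < 1) (ht : t ∈ Ioc 0 1) :
    0 < t * (1 - ρ ^ 2 * t) := by
  obtain ⟨ht0, ht1⟩ := ht
  have : ρ ^ 2 * t < 1 := by nlinarith
  exact mul_pos ht0 (by linarith)

theorem lt_mul_two_mul_sub_one_of_lt_root (ha : 0 < a)
    (hρ : ρ < (1 - Real.sqrt (8 * a ^ 2 + 1)) / (4 * a)) :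
    a < ρ * (2 * a * ρ - 1) := by
  have hs : Real.sqrt (8 * a ^ 2 + 1) ^ 2 = 8 * a ^ 2 + 1 := Real.sq_sqrt (by positivity)
  have hsnn := Real.sqrt_nonneg (8 * a ^ 2 + 1)
  have h4 : 4 * a * ρ < 1 - Real.sqrt (8 * a ^ 2 + 1) := by
    rwa [lt_div_iff₀ (by positivity), mul_comm] at hρ
  -- `4aρ - 1 < -√(8a² + 1) ≤ 0`, so squaring reverses: `(4aρ - 1)² > 8a² + 1`.
  nlinarith

end

theorem stmt8_general (a ρ : ℝ) (ha : 0 < a) (hρ1 : -1 < ρ) (hρ0 : ρ < 0)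
    (hρ : ρ < (1 - Real.sqrt (8 * a ^ 2 + 1)) / (4 * a)) :
    a / (ρ * (2 * a * ρ - 1)) ∈ Set.Ioo (0 : ℝ) 1 ∧
      ∀ t ∈ Set.Ioc (0 : ℝ) 1, t ≠ a / (ρ * (2 * a * ρ - 1)) →
        ((a / (ρ * (2 * a * ρ - 1))) - 2 * a * ρ * (a / (ρ * (2 * a * ρ - 1))) + a ^ 2) /
            ((a / (ρ * (2 * a * ρ - 1))) * (1 - ρ ^ 2 * (a / (ρ * (2 * a * ρ - 1))))) <
          (t - 2 * a * ρ * t + a ^ 2) / (t * (1 - ρ ^ 2 * t)) := by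
  have had : a < ρ * (2 * a * ρ - 1) := lt_mul_two_mul_sub_one_of_lt_root ha hρ
  have hd : 0 < ρ * (2 * a * ρ - 1) := ha.trans had
  have hρ2 : ρ ^ 2 < 1 := by nlinarith
  have hstar : a / (ρ * (2 * a * ρ - 1)) ∈ Ioo 0 1 := ⟨div_pos ha hd, (div_lt_one hd).2 had⟩
  have hmin := ruinExponent_div hd.ne' (mul_one_sub_sq_mul_pos hρ2 (Ioo_subset_Ioc_self hstar)).ne'
  refine ⟨hstar, fun t ht hne => ?_⟩
  change ruinExponent a ρ _ < ruinExponent a ρ t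
  rw [hmin]
  refine sq_lt_ruinExponent (mul_one_sub_sq_mul_pos hρ2 ht) fun h => hne ?_
  rw [eq_div_iff hd.ne']
  linarith

theorem stmt8 (a ρ : ℝ) (ha : 0 < a) (ha1 : a ≤ 1) (hρ1 : -1 < ρ) (hρ0 : ρ < 0)
    (hρ : ρ < (1 - Real.sqrt (8 * a ^ 2 + 1)) / (4 * a)) :
    a / (ρ * (2 * a * ρ - 1)) ∈ Set.Ioo (0 : ℝ) 1 ∧
      ∀ t ∈ Set.Ioc (0 : ℝ) 1, t ≠ a / (ρ * (2 * a * ρ - 1)) →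
        ((a / (ρ * (2 * a * ρ - 1))) - 2 * a * ρ * (a / (ρ * (2 * a * ρ - 1))) + a ^ 2) /
            ((a / (ρ * (2 * a * ρ - 1))) * (1 - ρ ^ 2 * (a / (ρ * (2 * a * ρ - 1))))) <
          (t - 2 * a * ρ * t + a ^ 2) / (t * (1 - ρ ^ 2 * t)) :=
  stmt8_general a ρ ha hρ1 hρ0 hρ
end

section
/- Let a ∈ (0,1], ρ ∈ (−1,1) with ρ > A_a = (1−√(8a²+1))/(4a) and a > max(0, ρ). Then the function f(t) = (t − 2aρt + a²)/(t(1 − ρ²t)) on (0,1] attains its minimum at t = 1, with minimal value (1 − 2aρ + a²)/(1 − ρ²). -/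
/-!
Clearing the (positive) denominators, `f t - f 1` has the sign of
`(1 - t) (a - ρ) (a + ρ - 2 a ρ²) + (1 - 2 a ρ + a²) ρ² (1 - t)²`.
The roots of `2 a ρ² - ρ - a` are `(1 ± √(8a² + 1)) / (4a)`; the smaller one is `A_a` and the
larger one is at least `1` when `a ≤ 1`, so `A_a < ρ < 1` makes `a + ρ - 2 a ρ²` positive.
-/

/-- The quadratic form `(1, a) Σ_{1,t}⁻¹ (1, a)ᵀ` with `Σ_{1,t} = [[1, ρt], [ρt, t]]`. -/
noncomputable def quadFormInv (a ρ t : ℝ) : ℝ :=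
  (t - 2 * a * ρ * t + a ^ 2) / (t * (1 - ρ ^ 2 * t))

lemma two_mul_sq_sub_sub_eq_mul_roots {a : ℝ} (ha : a ≠ 0) (ρ : ℝ) :
    2 * a * ρ ^ 2 - ρ - a =
      2 * a * (ρ - (1 - √(8 * a ^ 2 + 1)) / (4 * a)) *
        (ρ - (1 + √(8 * a ^ 2 + 1)) / (4 * a)) := by
  have hs : √(8 * a ^ 2 + 1) ^ 2 = 8 * a ^ 2 + 1 := Real.sq_sqrt (by positivity)
  generalize √(8 * a ^ 2 + 1) = s at hs ⊢
  field_simp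
  linear_combination 2 * hs

lemma one_le_larger_root {a : ℝ} (ha0 : 0 < a) (ha1 : a ≤ 1) :
    1 ≤ (1 + √(8 * a ^ 2 + 1)) / (4 * a) := by
  rw [one_le_div (by positivity)]
  have h : (4 * a - 1) ^ 2 ≤ 8 * a ^ 2 + 1 := by nlinarith
  linarith [Real.le_sqrt_of_sq_le h]

lemma two_mul_sq_sub_sub_neg {a ρ : ℝ} (ha0 : 0 < a) (ha1 : a ≤ 1)
    (hρA : (1 - √(8 * a ^ 2 + 1)) / (4 * a) < ρ) (hρ1 : ρ < 1) :
    2 * a * ρ ^ 2 - ρ - a < 0 := by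
  rw [two_mul_sq_sub_sub_eq_mul_roots ha0.ne']
  refine mul_neg_of_pos_of_neg (mul_pos (by positivity) (sub_pos.2 hρA)) ?_
  linarith [one_le_larger_root ha0 ha1]

lemma quadFormInv_one_le {a ρ t : ℝ} (hρ : ρ ^ 2 < 1) (hρa : ρ ≤ a)
    (hq : 2 * a * ρ ^ 2 - ρ - a ≤ 0) (ht0 : 0 < t) (ht1 : t ≤ 1) :
    quadFormInv a ρ 1 ≤ quadFormInv a ρ t := by
  have hK : 0 ≤ 1 - 2 * a * ρ + a ^ 2 := by nlinarith [sq_nonneg (a - ρ)]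
  have hρt : ρ ^ 2 * t ≤ ρ ^ 2 := mul_le_of_le_one_right (sq_nonneg ρ) ht1
  unfold quadFormInv
  rw [div_le_div_iff₀ (by nlinarith) (mul_pos ht0 (by nlinarith))]
  have hD : (t - 2 * a * ρ * t + a ^ 2) * (1 * (1 - ρ ^ 2 * 1)) -
        (1 - 2 * a * ρ * 1 + a ^ 2) * (t * (1 - ρ ^ 2 * t)) =
      (1 - t) * (a - ρ) * -(2 * a * ρ ^ 2 - ρ - a) +
        (1 - 2 * a * ρ + a ^ 2) * (ρ * (1 - t)) ^ 2 := by ring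
  have h₁ : 0 ≤ (1 - t) * (a - ρ) * -(2 * a * ρ ^ 2 - ρ - a) :=
    mul_nonneg (mul_nonneg (by linarith) (by linarith)) (by linarith)
  have h₂ : 0 ≤ (1 - 2 * a * ρ + a ^ 2) * (ρ * (1 - t)) ^ 2 := mul_nonneg hK (sq_nonneg _)
  linarith

theorem stmt9 (a ρ : ℝ) (hρ : ρ ∈ Set.Ioo (-1 : ℝ) 1)
    (hρA : (1 - Real.sqrt (8 * a ^ 2 + 1)) / (4 * a) < ρ)
    (ha : max 0 ρ < a) (ha1 : a ≤ 1) :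
    (∀ t ∈ Set.Ioc (0 : ℝ) 1,
        (1 - 2 * a * ρ * 1 + a ^ 2) / (1 * (1 - ρ ^ 2 * 1)) ≤
          (t - 2 * a * ρ * t + a ^ 2) / (t * (1 - ρ ^ 2 * t))) ∧
      (1 - 2 * a * ρ * 1 + a ^ 2) / (1 * (1 - ρ ^ 2 * 1)) =
        (1 - 2 * a * ρ + a ^ 2) / (1 - ρ ^ 2) := by
  obtain ⟨hρ₀, hρ₁⟩ := hρ
  have ha0 : 0 < a := (le_max_left _ _).trans_lt ha
  have hρa : ρ < a := (le_max_right _ _).trans_lt ha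
  have hρsq : ρ ^ 2 < 1 := (sq_lt_one_iff_abs_lt_one ρ).2 (abs_lt.2 ⟨hρ₀, hρ₁⟩)
  have hq := two_mul_sq_sub_sub_neg ha0 ha1 hρA hρ₁
  exact ⟨fun t ht => quadFormInv_one_le hρsq hρa.le hq.le ht.1 ht.2, by ring⟩
end

section
/- Let W be a standard Brownian motion, b, c > 0 with 2b > c, and S ≥ 0. Then the integral ∫_ℝ P(∃ t' ≥ 0 ∀ t ∈ [t', t'+S]: W(t) − bt > x) e^{cx} dx is finite and strictly positive. -/
open MeasureTheory ProbabilityTheory Set Filter Matrix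

/-- A standard one-dimensional Brownian motion. -/
structure IsStandardBM {Ω : Type*} [MeasureSpace Ω] (B : ℝ → Ω → ℝ) : Prop where
  measurable : ∀ t : ℝ, Measurable (B t)
  start : ∀ᵐ ω : Ω, B 0 ω = 0
  cont : ∀ᵐ ω : Ω, Continuous fun t => B t ω
  incr : ∀ s t : ℝ, 0 ≤ s → s ≤ t →
    Measure.map (fun ω => B t ω - B s ω) (ℙ : Measure Ω) =
      gaussianReal 0 (Real.toNNReal (t - s))
  indep : ∀ (n : ℕ) (ts : Fin (n + 1) → ℝ), Monotone ts →
    iIndepFun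
      (fun i : Fin n => fun ω => B (ts i.succ) ω - B (ts i.castSucc) ω)
      (ℙ : Measure Ω)

/-!
The Parisian event at level `x` lies inside `{∃ s ≥ 0, W s - b s > x}`, whose probability is at
most `exp (-2 b x)`: along any grid of times, `exp (2 b W_t - 2 b² t)` is a nonnegative martingale
of mean one (a product of independent mean-one factors), so Ville's maximal inequality applies, and
continuity of the paths passes from dyadic grids to all times. Since `c < 2 b` the integrand is
integrable on `[0, ∞)`, and on `(-∞, 0]` it is at most `exp (c x)`. For positivity, continuity keeps
`W t - b t` bounded below on `[0, S]` almost surely, so the probability is positive at some level,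
hence on a half-line, as it is antitone in `x`.
-/

open Real Finset
open scoped NNReal ENNReal

section IndependentProducts

variable {Ω : Type*} {m : MeasurableSpace Ω} {μ : Measure Ω} {ξ : ℕ → Ω → ℝ}

lemma ProbabilityTheory.iIndepFun.integrable_prod_range (hξ : iIndepFun ξ μ)
    (hmeas : ∀ k, Measurable (ξ k)) (hint : ∀ k, Integrable (ξ k) μ) (n : ℕ) :
    Integrable (∏ j ∈ range n, ξ j) μ := by
  have := hξ.isProbabilityMeasure
  induction n with
  | zero => rw [prod_range_zero]; exact integrable_const (1 : ℝ)
  | succ n ih =>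
    rw [prod_range_succ]
    exact (hξ.indepFun_prod_range_succ hmeas n).integrable_mul ih (hint n)

lemma ProbabilityTheory.iIndepFun.martingale_prod_range (hξ : iIndepFun ξ μ)
    (hsm : ∀ k, StronglyMeasurable (ξ k)) (hint : ∀ k, Integrable (ξ k) μ)
    (hmean : ∀ k, μ[ξ k] = 1) :
    Martingale (fun k => ∏ j ∈ range (k + 1), ξ j) (Filtration.natural ξ hsm) μ := by
  have := hξ.isProbabilityMeasure
  have hmeas : ∀ k, Measurable (ξ k) := fun k => (hsm k).measurable
  have hadapted : StronglyAdapted (Filtration.natural ξ hsm)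
      (fun k => ∏ j ∈ range (k + 1), ξ j) := fun k =>
    Finset.stronglyMeasurable_prod _ fun j hj =>
      (Filtration.stronglyAdapted_natural hsm j).mono
        ((Filtration.natural ξ hsm).mono (mem_range_succ_iff.mp hj))
  refine martingale_nat hadapted (hξ.integrable_prod_range hmeas hint ·.succ) fun k => ?_
  have hsucc : ∏ j ∈ range (k + 2), ξ j = (∏ j ∈ range (k + 1), ξ j) * ξ (k + 1) :=
    prod_range_succ _ _
  rw [hsucc]
  refine (condExp_mul_of_stronglyMeasurable_left (hadapted k) ?_ (hint (k + 1))).trans ?_ |>.symm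
  · rw [← hsucc]; exact hξ.integrable_prod_range hmeas hint _
  filter_upwards [hξ.condExp_natural_ae_eq_of_lt hsm (Nat.lt_succ_self k)] with ω hω
  simp [hω, hmean]

end IndependentProducts

/-- Ville's maximal inequality. -/
lemma MeasureTheory.Martingale.measure_exists_ge_le {Ω : Type*} {m : MeasurableSpace Ω}
    {μ : Measure Ω} [IsFiniteMeasure μ] {ℱ : Filtration ℕ m} {M : ℕ → Ω → ℝ}
    (hM : Martingale M ℱ μ) (hnonneg : 0 ≤ M) {ε : ℝ} (hε : 0 < ε) :
    μ {ω | ∃ k, ε ≤ M k ω} ≤ ENNReal.ofReal ((∫ ω, M 0 ω ∂μ) / ε) := by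
  have hunion : {ω | ∃ k, ε ≤ M k ω} = ⋃ n, {ω | ∃ k ≤ n, ε ≤ M k ω} := by
    ext ω; simp only [mem_ofPred_eq, mem_iUnion]
    exact ⟨fun ⟨k, hk⟩ => ⟨k, k, le_rfl, hk⟩, fun ⟨_, k, _, hk⟩ => ⟨k, hk⟩⟩
  have hmono : Monotone fun n => {ω | ∃ k ≤ n, ε ≤ M k ω} :=
    fun n n' h ω ⟨k, hk, hkε⟩ => ⟨k, hk.trans h, hkε⟩
  rw [hunion, hmono.measure_iUnion, ENNReal.ofReal_div_of_pos hε]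
  refine iSup_le fun n => ?_
  rw [ENNReal.le_div_iff_mul_le (.inl (by simpa using hε)) (.inl ENNReal.ofReal_ne_top), mul_comm]
  set A := {ω | (ε.toNNReal : ℝ) ≤ (range (n + 1)).sup' nonempty_range_add_one fun k => M k ω}
  have hsub : {ω | ∃ k ≤ n, ε ≤ M k ω} ⊆ A := fun ω ⟨k, hk, hkε⟩ => by
    simp only [A, mem_ofPred_eq, Real.coe_toNNReal _ hε.le]
    exact hkε.trans (le_sup' (fun k => M k ω) (mem_range_succ_iff.mpr hk))
  calc ENNReal.ofReal ε * μ {ω | ∃ k ≤ n, ε ≤ M k ω} ≤ ε.toNNReal * μ A := by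
        gcongr; rfl
    _ ≤ ENNReal.ofReal (∫ ω in A, M n ω ∂μ) := maximal_ineq hM.submartingale hnonneg n
    _ ≤ ENNReal.ofReal (∫ ω, M n ω ∂μ) :=
        ENNReal.ofReal_le_ofReal (setIntegral_le_integral (hM.integrable n)
          (Eventually.of_forall (hnonneg n)))
    _ = ENNReal.ofReal (∫ ω, M 0 ω ∂μ) := by
        simpa using congrArg ENNReal.ofReal
          (hM.setIntegral_eq (Nat.zero_le n) MeasurableSet.univ).symm

lemma exists_dyadic_mem_ball {s δ : ℝ} (hs : 0 ≤ s) (hδ : 0 < δ) :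
    ∃ N k : ℕ, ((k + 1 : ℕ) : ℝ) / 2 ^ N ∈ Metric.ball s δ := by
  obtain ⟨N, hN⟩ := exists_pow_lt_of_lt_one hδ one_half_lt_one
  have h2N : (0 : ℝ) < 2 ^ N := by positivity
  have hN' : 1 < δ * 2 ^ N := by rwa [div_pow, one_pow, div_lt_iff₀ h2N] at hN
  refine ⟨N, ⌊s * 2 ^ N⌋₊, ?_⟩
  rw [Metric.mem_ball, Real.dist_eq, abs_lt, lt_sub_iff_add_lt, sub_lt_iff_lt_add,
    lt_div_iff₀ h2N, div_lt_iff₀ h2N]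
  push_cast
  constructor <;>
    nlinarith [Nat.lt_floor_add_one (s * 2 ^ N), Nat.floor_le (mul_nonneg hs h2N.le)]

namespace IsStandardBM

variable {Ω : Type*} [MeasureSpace Ω] {W : ℝ → Ω → ℝ}

lemma iIndepFun_increments (hW : IsStandardBM W) {t : ℕ → ℝ} (ht : Monotone t) :
    iIndepFun (fun k ω => W (t (k + 1)) ω - W (t k) ω) ℙ := by
  rw [iIndepFun_iff_finset]
  intro s
  obtain ⟨n, hn⟩ : ∃ n, ∀ k ∈ s, k < n :=
    ⟨s.sup id + 1, fun k hk => Nat.lt_succ_of_le (le_sup (f := id) hk)⟩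
  exact (hW.indep n (fun i => t i) fun i j hij => ht hij).precomp
    (g := fun k : s => (⟨k, hn k k.2⟩ : Fin n)) fun k l h => Subtype.ext (congrArg Fin.val h)

lemma mgf_sub (hW : IsStandardBM W) {s t : ℝ} (hs : 0 ≤ s) (hst : s ≤ t) (θ : ℝ) :
    mgf (fun ω => W t ω - W s ω) ℙ θ = exp ((t - s) * θ ^ 2 / 2) := by
  rw [mgf_gaussianReal (hW.incr s t hs hst), Real.coe_toNNReal _ (sub_nonneg.2 hst), zero_mul,
    zero_add, mul_div_assoc]

variable [IsProbabilityMeasure (ℙ : Measure Ω)]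

lemma measure_exists_exp_ge_le (hW : IsStandardBM W) {t : ℕ → ℝ} (ht : Monotone t)
    (ht0 : 0 ≤ t 0) (θ : ℝ) {ε : ℝ} (hε : 0 < ε) :
    ℙ {ω | ∃ k, ε ≤ exp (θ * (W (t (k + 1)) ω - W (t 0) ω) - (t (k + 1) - t 0) * θ ^ 2 / 2)} ≤
      ENNReal.ofReal ε⁻¹ := by
  set ξ : ℕ → Ω → ℝ := fun k ω =>
    exp (θ * (W (t (k + 1)) ω - W (t k) ω) - (t (k + 1) - t k) * θ ^ 2 / 2)
  have hmeas : ∀ k, Measurable (ξ k) := fun k => by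
    have := hW.measurable; fun_prop
  have hindep : iIndepFun ξ ℙ := (hW.iIndepFun_increments ht).comp
    (fun k y => exp (θ * y - (t (k + 1) - t k) * θ ^ 2 / 2)) fun k => by fun_prop
  have hmgf : ∀ k, mgf (fun ω => W (t (k + 1)) ω - W (t k) ω) ℙ θ =
      exp ((t (k + 1) - t k) * θ ^ 2 / 2) := fun k =>
    hW.mgf_sub (ht0.trans (ht (Nat.zero_le k))) (ht k.le_succ) θ
  have hint : ∀ k, Integrable (ξ k) ℙ := fun k => by
    simp_rw [ξ, Real.exp_sub]
    exact (mgf_pos_iff.mp (hmgf k ▸ exp_pos _)).div_const _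
  have hmean : ∀ k, ℙ[ξ k] = 1 := fun k => by
    simp_rw [ξ, Real.exp_sub]
    rw [integral_div, ← mgf, hmgf k, div_self (exp_pos _).ne']
  have htelescope : ∀ k ω, (∏ j ∈ range (k + 1), ξ j) ω =
      exp (θ * (W (t (k + 1)) ω - W (t 0) ω) - (t (k + 1) - t 0) * θ ^ 2 / 2) := fun k ω => by
    rw [prod_apply, ← Real.exp_sum, sum_sub_distrib, ← mul_sum, ← sum_div, ← sum_mul,
      sum_range_sub (fun i => W (t i) ω), sum_range_sub t]
  have hM := hindep.martingale_prod_range (fun k => (hmeas k).stronglyMeasurable) hint hmean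
  have hville := hM.measure_exists_ge_le
    (fun k ω => by simp only [Pi.zero_apply, htelescope]; positivity) hε
  simpa [htelescope, hmean 0] using hville

lemma measure_exists_sub_mul_ge_le (hW : IsStandardBM W) {b : ℝ} (hb : 0 < b) {t : ℕ → ℝ}
    (ht : Monotone t) (ht0 : 0 ≤ t 0) (x : ℝ) :
    ℙ {ω | ∃ k, x ≤ W (t (k + 1)) ω - W (t 0) ω - b * (t (k + 1) - t 0)} ≤
      ENNReal.ofReal (exp (-(2 * b * x))) := by
  rw [exp_neg]
  refine (measure_mono ?_).trans
    (hW.measure_exists_exp_ge_le ht ht0 (2 * b) (exp_pos (2 * b * x)))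
  rintro ω ⟨k, hk⟩
  exact ⟨k, exp_le_exp.2 (by nlinarith)⟩

lemma measure_exists_sub_mul_gt_le (hW : IsStandardBM W) {b : ℝ} (hb : 0 < b) (x : ℝ) :
    ℙ {ω | ∃ s, 0 ≤ s ∧ x < W s ω - b * s} ≤ ENNReal.ofReal (exp (-(2 * b * x))) := by
  set t : ℕ → ℕ → ℝ := fun N k => k / 2 ^ N
  set D : ℕ → Set Ω := fun N =>
    {ω | ∃ k, x ≤ W (t N (k + 1)) ω - W (t N 0) ω - b * (t N (k + 1) - t N 0)}
  have ht : ∀ N, Monotone (t N) := fun N k l hkl => by simp only [t]; gcongr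
  have ht0 : ∀ N, t N 0 = 0 := fun N => by simp [t]
  -- the grids are nested: `(k + 1) / 2 ^ N = (2 k + 2) / 2 ^ (N + 1)`
  have hD : Monotone D := monotone_nat_of_le_succ fun N ω ⟨k, hk⟩ => ⟨2 * k + 1, by
    have : t (N + 1) (2 * k + 1 + 1) = t N (k + 1) := by
      simp only [t]; push_cast; rw [pow_succ]; field_simp; ring
    rwa [this, ht0, ← ht0 N]⟩
  have hcover : ∀ᵐ ω, ω ∈ {ω | ∃ s, 0 ≤ s ∧ x < W s ω - b * s} → ω ∈ ⋃ N, D N := by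
    filter_upwards [hW.start, hW.cont] with ω h0 hcont
    rintro ⟨s, hs, hx⟩
    have hg : Continuous fun u => W u ω - b * u := by fun_prop
    obtain ⟨δ, hδ, hball⟩ := Metric.isOpen_iff.mp (isOpen_lt continuous_const hg) s hx
    obtain ⟨N, k, hk⟩ := exists_dyadic_mem_ball hs hδ
    refine mem_iUnion.mpr ⟨N, k, ?_⟩
    simpa [ht0, h0] using (hball hk).le
  calc ℙ {ω | ∃ s, 0 ≤ s ∧ x < W s ω - b * s} ≤ ℙ (⋃ N, D N) := measure_mono_ae hcover
    _ = ⨆ N, ℙ (D N) := hD.measure_iUnion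
    _ ≤ _ := iSup_le fun N => by
        simpa only [D, ht0, sub_zero] using
          hW.measure_exists_sub_mul_ge_le hb (ht N) (ht0 N).ge x

end IsStandardBM

lemma integrable_mul_exp_of_le_exp_neg {g : ℝ → ℝ} {a c : ℝ} (hg : AEStronglyMeasurable g)
    (h0 : ∀ x, 0 ≤ g x) (h1 : ∀ x, g x ≤ 1) (hdecay : ∀ x, 0 < x → g x ≤ exp (-(a * x)))
    (hc : 0 < c) (hca : c < a) :
    Integrable fun x => g x * exp (c * x) := by
  have hmeas : AEStronglyMeasurable (fun x => g x * exp (c * x)) :=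
    hg.mul (by fun_prop)
  have hnorm : ∀ x, ‖g x * exp (c * x)‖ = g x * exp (c * x) := fun x =>
    Real.norm_of_nonneg (mul_nonneg (h0 x) (exp_pos _).le)
  rw [← integrableOn_univ, ← Iic_union_Ioi (a := (0 : ℝ))]
  refine IntegrableOn.union ?_ ?_
  · refine (integrableOn_exp_mul_Iic hc 0).mono' hmeas.restrict (Eventually.of_forall fun x => ?_)
    rw [hnorm]
    exact mul_le_of_le_one_left (exp_pos _).le (h1 x)
  · refine (integrableOn_exp_mul_Ioi (sub_neg.2 hca) 0).mono' hmeas.restrict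
      ((ae_restrict_iff' measurableSet_Ioi).2 (Eventually.of_forall fun x hx => ?_))
    calc ‖g x * exp (c * x)‖ ≤ exp (-(a * x)) * exp (c * x) := by
          rw [hnorm]; gcongr; exact hdecay x hx
      _ = exp ((c - a) * x) := by rw [← exp_add]; ring_nf

lemma integral_mul_exp_pos_of_antitone {g : ℝ → ℝ} (hanti : Antitone g) (h0 : ∀ x, 0 ≤ g x)
    (hpos : ∃ x, 0 < g x) (c : ℝ) (hint : Integrable fun x => g x * exp (c * x)) :
    0 < ∫ x, g x * exp (c * x) := by
  obtain ⟨x₀, hx₀⟩ := hpos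
  rw [integral_pos_iff_support_of_nonneg (fun x => mul_nonneg (h0 x) (exp_pos _).le) hint]
  calc (0 : ℝ≥0∞) < volume (Iic x₀) := by simp
    _ ≤ volume (Function.support fun x => g x * exp (c * x)) := measure_mono fun x hx =>
        (mul_pos (hx₀.trans_le (hanti hx)) (exp_pos _)).ne'

section Parisian

variable {Ω : Type*} [MeasureSpace Ω]

def parisianProb (W : ℝ → Ω → ℝ) (b S x : ℝ) : ℝ :=
  (ℙ {ω : Ω | ∃ t' : ℝ, 0 ≤ t' ∧ ∀ t ∈ Icc t' (t' + S), W t ω - b * t > x}).toReal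

variable (W : ℝ → Ω → ℝ) (b S : ℝ)

lemma parisianProb_nonneg (x : ℝ) : 0 ≤ parisianProb W b S x := ENNReal.toReal_nonneg

variable [IsProbabilityMeasure (ℙ : Measure Ω)]

lemma antitone_parisianProb : Antitone (parisianProb W b S) := fun _ _ hxy =>
  ENNReal.toReal_mono (measure_ne_top _ _) <| measure_mono fun _ ⟨t', ht', h⟩ =>
    ⟨t', ht', fun t ht => hxy.trans_lt (h t ht)⟩

lemma parisianProb_le_one (x : ℝ) : parisianProb W b S x ≤ 1 := measureReal_le_one

variable {W b S}

lemma parisianProb_le_exp (hW : IsStandardBM W) (hb : 0 < b) (hS : 0 ≤ S) (x : ℝ) :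
    parisianProb W b S x ≤ exp (-(2 * b * x)) := by
  refine ENNReal.toReal_le_of_le_ofReal (exp_pos _).le <|
    (measure_mono ?_).trans (hW.measure_exists_sub_mul_gt_le hb x)
  rintro ω ⟨t', ht', h⟩
  exact ⟨t', ht', h t' ⟨le_rfl, le_add_of_nonneg_right hS⟩⟩

lemma exists_parisianProb_pos (hW : IsStandardBM W) : ∃ x, 0 < parisianProb W b S x := by
  set E : ℕ → Set Ω := fun n =>
    {ω | ∃ t' : ℝ, 0 ≤ t' ∧ ∀ t ∈ Icc t' (t' + S), W t ω - b * t > -n}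
  have hcover : ∀ᵐ ω, ω ∈ ⋃ n, E n := by
    filter_upwards [hW.cont] with ω hcont
    obtain ⟨m, hm⟩ := (isCompact_Icc (a := 0) (b := 0 + S)).bddBelow_image
      (f := fun t => W t ω - b * t) (by fun_prop)
    obtain ⟨n, hn⟩ := exists_nat_gt (-m)
    exact mem_iUnion.2 ⟨n, 0, le_rfl, fun t ht => by linarith [hm (mem_image_of_mem _ ht)]⟩
  obtain ⟨n, hn⟩ := exists_measure_pos_of_not_measure_iUnion_null (μ := ℙ) (s := E) <| by
    rw [measure_congr (ae_eq_univ.2 (ae_iff.1 hcover)), measure_univ]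
    exact one_ne_zero
  exact ⟨-n, ENNReal.toReal_pos hn.ne' (measure_ne_top _ _)⟩

end Parisian

theorem stmt12 {Ω : Type*} [MeasureSpace Ω] [IsProbabilityMeasure (ℙ : Measure Ω)]
    (W : ℝ → Ω → ℝ) (hW : IsStandardBM W) (b c S : ℝ)
    (hb : 0 < b) (hc : 0 < c) (hcb : c < 2 * b) (hS : 0 ≤ S) :
    Integrable (fun x : ℝ =>
        (ℙ {ω : Ω | ∃ t' : ℝ, 0 ≤ t' ∧ ∀ t ∈ Icc t' (t' + S), W t ω - b * t > x}).toReal *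
          Real.exp (c * x)) ∧
      0 < ∫ x : ℝ,
        (ℙ {ω : Ω | ∃ t' : ℝ, 0 ≤ t' ∧ ∀ t ∈ Icc t' (t' + S), W t ω - b * t > x}).toReal *
          Real.exp (c * x) := by
  have hanti := antitone_parisianProb W b S
  have hint : Integrable fun x => parisianProb W b S x * exp (c * x) :=
    integrable_mul_exp_of_le_exp_neg hanti.measurable.aestronglyMeasurable
      (parisianProb_nonneg W b S) (parisianProb_le_one W b S)
      (fun x _ => parisianProb_le_exp hW hb hS x) hc hcb
  exact ⟨hint, integral_mul_exp_pos_of_antitone hanti (parisianProb_nonneg W b S)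
    (exists_parisianProb_pos hW) c hint⟩
end
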